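/- Let k ∈ ℂ and let α : ℂ → ℂ be analytic at z with α'(z) ≠ 0. Then −(k+1)·(deriv (fun w => w + k·α(w)/α'(w)) z)·α'(z)² = k·(k+1)·α(z)·α''(z) − (k+1)²·α'(z)²; that is, −(k+1)·φ_α'·(α')² equals the second Rankin–Cohen bracket [α,α]₂ of α with itself (both factors of weight k). -/

import Mathlib

variable {𝕜 : Type*} [NontriviallyNormedField 𝕜]

noncomputable def phiOperator (k : 𝕜) (α : 𝕜 → 𝕜) (w : 𝕜) : 𝕜 :=
  w + k * α w / deriv α w

theorem hasDerivAt_phiOperator (k : 𝕜) {α : 𝕜 → 𝕜} {z : 𝕜} (hα : DifferentiableAt 𝕜 α z)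
    (hα'' : DifferentiableAt 𝕜 (deriv α) z) (hα' : deriv α z ≠ 0) :
    HasDerivAt (phiOperator k α)
      (1 + k * (deriv α z ^ 2 - α z * deriv (deriv α) z) / deriv α z ^ 2) z := by
  refine ((hasDerivAt_id z).add
    ((hα.hasDerivAt.const_mul k).div hα''.hasDerivAt hα')).congr_deriv ?_
  ring

theorem phi_critical_points
    (k : ℂ) (α : ℂ → ℂ) (z : ℂ)
    (hα : AnalyticAt ℂ α z) (hα' : deriv α z ≠ 0) :
    -(k + 1) * deriv (fun w => w + k * α w / deriv α w) z * (deriv α z) ^ 2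
      = k * (k + 1) * α z * deriv (deriv α) z - (k + 1) ^ 2 * (deriv α z) ^ 2 := by
  change -(k + 1) * deriv (phiOperator k α) z * _ = _
  rw [(hasDerivAt_phiOperator k hα.differentiableAt hα.deriv.differentiableAt hα').deriv]
  field_simp
  ring
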